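/- (Lemma 2 of the Supplemental Material, concrete form.) Let d ≥ 2, D ≥ 1, let ρ* be a density matrix on ℂ^D ⊗ ℂ^d, and for each x ∈ Fin d let (A_{x,i})_{i∈Fin m} be a Kraus family encoding from ℂ^D to ℂ^d; set ρ_x := Σ_{i∈Fin m} (A_{x,i} ⊗ I_d) ρ* (A_{x,i} ⊗ I_d)†. Suppose there are pairwise orthogonal unit vectors Φ_0,…,Φ_{d−1} ∈ ℂ^d ⊗ ℂ^d with K(ρ_x) = Φ_x Φ_x† for every x ∈ Fin d (perfect transmission of a classical dit through the controlled order of d information-erasing channels). Then for every x ∈ Fin d, ρ_x = Φ_x Φ_x†, and each Φ_x satisfies P_0 Φ_x = Φ_x and |⟨e_j ⊗ e_j, Φ_x⟩|² = 1/d for all j; in particular every encoded state ρ_x is a d-dimensional maximally entangled pure state. -/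

import Mathlib

open Matrix Kronecker BigOperators Complex
open scoped ComplexOrder

noncomputable def Emat (d : ℕ) (j i : Fin d) : Matrix (Fin d) (Fin d) ℂ :=
  Matrix.single j i 1

noncomputable def P0 (d : ℕ) : Matrix (Fin d × Fin d) (Fin d × Fin d) ℂ :=
  ∑ j : Fin d, Emat d j j ⊗ₖ Emat d j j

noncomputable def Sop (d : ℕ) [NeZero d] (idx : Fin d → Fin d) :
    Matrix (Fin d × Fin d) (Fin d × Fin d) ℂ :=
  ∑ j : Fin d,
    (((List.finRange d).map (fun k => Emat d (j + k) (idx (j + k)))).prod) ⊗ₖ Emat d j j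

/-- The channel `K(ρ) = P₀ ρ P₀ + Σ_j Σ_{l≠j} ρ((l,j),(l,j)) |jj⟩⟨jj|`. -/
noncomputable def Kch (d : ℕ) (ρ : Matrix (Fin d × Fin d) (Fin d × Fin d) ℂ) :
    Matrix (Fin d × Fin d) (Fin d × Fin d) ℂ :=
  P0 d * ρ * P0 d +
    ∑ j : Fin d, ∑ l ∈ Finset.univ.filter (fun l : Fin d => l ≠ j),
      ρ (l, j) (l, j) • (Emat d j j ⊗ₖ Emat d j j)

/-- Standard basis vector `e_j` of `ℂ^d`. -/
noncomputable def eVec (d : ℕ) (j : Fin d) : Fin d → ℂ := fun i => if i = j then 1 else 0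

/-- The vector `e_j ⊗ e_j ∈ ℂ^d ⊗ ℂ^d`. -/
noncomputable def ejj (d : ℕ) (j : Fin d) : Fin d × Fin d → ℂ :=
  fun p => eVec d j p.1 * eVec d j p.2

/-- The encoded state `ρ_x = Σ_i (A_{x,i} ⊗ I) ρ* (A_{x,i} ⊗ I)†`. -/
noncomputable def encode (d D m : ℕ) (A : Fin d → Fin m → Matrix (Fin d) (Fin D) ℂ)
    (ρ : Matrix (Fin D × Fin d) (Fin D × Fin d) ℂ) (x : Fin d) :
    Matrix (Fin d × Fin d) (Fin d × Fin d) ℂ :=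
  ∑ i : Fin m, (A x i ⊗ₖ (1 : Matrix (Fin d) (Fin d) ℂ)) * ρ *
    (A x i ⊗ₖ (1 : Matrix (Fin d) (Fin d) ℂ))ᴴ

/-!
Since `K(ρ_x) = Φ_x Φ_x†` vanishes at `((a, b), (a, b))` for `a ≠ b`, every `Φ_x` lives on the
span of the `e_j ⊗ e_j`, and the entry at `((j, j), (j, j))` gives
`|Φ_x(j, j)|² = Σ_l ρ_x((l, j), (l, j))`. As the encoding is trace preserving on the first factor,
this is the `j`-th diagonal entry of the reduced state of `ρ*`, independent of `x`. The square
matrix `(Φ_x(j, j))_{x, j}` has orthonormal rows, hence orthonormal columns, so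
`|Φ_x(j, j)|² = 1/d`. Writing `R_j = Σ_{l ≠ j} ρ_x((l, j), (l, j))` for the weight that `K` moves
onto `|jj⟩`, the `2 × 2` minor of `ρ_x` on `(j, j), (l, l)` evaluated at
`(Φ_x(j, j), -Φ_x(l, l))` equals `-(R_j + R_l)/d ≥ 0`, so every `R_j` vanishes. Positivity then
confines `ρ_x` to the span of the `e_j ⊗ e_j`, where `K` acts as the identity.
-/

namespace Matrix.PosSemidef

variable {n 𝕜 : Type*} [Fintype n] [DecidableEq n] [RCLike 𝕜] {A : Matrix n n 𝕜}

lemma apply_eq_zero_of_diag_eq_zero_right (hA : A.PosSemidef) {p : n} (hp : A p p = 0) (q : n) :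
    A q p = 0 := by
  have hcol : A *ᵥ Pi.single p 1 = 0 :=
    (hA.dotProduct_mulVec_zero_iff _).mp (by simpa [mulVec_single, ← Pi.single_star] using hp)
  simpa [mulVec_single] using congrFun hcol q

lemma apply_eq_zero_of_diag_eq_zero_left (hA : A.PosSemidef) {p : n} (hp : A p p = 0) (q : n) :
    A p q = 0 := by
  rw [← hA.isHermitian.apply, hA.apply_eq_zero_of_diag_eq_zero_right hp, star_zero]

end Matrix.PosSemidef

lemma star_single_add_single_dotProduct_mulVec {R n : Type*} [CommRing R] [StarRing R] [Fintype n]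
    [DecidableEq n] (M : Matrix n n R) (p q : n) (a b : R) :
    star (Pi.single p a + Pi.single q b) ⬝ᵥ M *ᵥ (Pi.single p a + Pi.single q b) =
      star a * M p p * a + star a * M p q * b + star b * M q p * a + star b * M q q * b := by
  simp only [star_add, ← Pi.single_star, mulVec_add, mulVec_single, dotProduct_add,
    add_dotProduct, single_dotProduct, Pi.smul_apply, MulOpposite.smul_eq_mul_unop,
    MulOpposite.unop_op, col_apply]
  ring

lemma sum_norm_sq_apply_eq_one_of_mul_conjTranspose_eq_one {n 𝕜 : Type*} [Fintype n]
    [DecidableEq n] [RCLike 𝕜] {U : Matrix n n 𝕜} (hU : U * Uᴴ = 1) (j : n) :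
    ∑ i, ‖U i j‖ ^ 2 = 1 := by
  have h : (Uᴴ * U) j j = (1 : Matrix n n 𝕜) j j := by rw [mul_eq_one_comm.mp hU]
  simp only [mul_apply, conjTranspose_apply, one_apply_eq, RCLike.star_def, RCLike.conj_mul] at h
  exact_mod_cast h

lemma dotProduct_eq_sum_diag {n R : Type*} [Fintype n] [NonUnitalNonAssocSemiring R]
    {v : n × n → R} (hv : ∀ p : n × n, p.1 ≠ p.2 → v p = 0) (w : n × n → R) :
    v ⬝ᵥ w = ∑ j, v (j, j) * w (j, j) := by
  rw [dotProduct, Fintype.sum_prod_type]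
  refine Finset.sum_congr rfl fun a _ => ?_
  rw [Finset.sum_eq_single a (fun b _ hb => by rw [hv (a, b) (Ne.symm hb), zero_mul]) (by simp)]

section PartialTrace

variable {R k n o ι : Type*} [CommRing R] [StarRing R] [Fintype k] [DecidableEq o]

lemma kronecker_one_mul_mul_conjTranspose_submatrix [Fintype o] (B : Matrix n k R)
    (ρ : Matrix (k × o) (k × o) R) (j : o) :
    ((B ⊗ₖ (1 : Matrix o o R)) * ρ * (B ⊗ₖ (1 : Matrix o o R))ᴴ).submatrix (·, j) (·, j) =
      B * ρ.submatrix (·, j) (·, j) * Bᴴ := by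
  ext l l'
  simp only [submatrix_apply, mul_apply, conjTranspose_apply, kroneckerMap_apply, one_apply,
    Fintype.sum_prod_type, mul_ite, ite_mul, zero_mul, mul_zero, mul_one, apply_ite (star : R → R),
    star_zero, Finset.sum_ite_eq, Finset.mem_univ, if_true]

lemma sum_kraus_kronecker_one_apply_diag [Fintype n] [Fintype o] [Fintype ι] [DecidableEq k]
    (B : ι → Matrix n k R) (hB : ∑ i, (B i)ᴴ * B i = 1) (ρ : Matrix (k × o) (k × o) R) (j : o) :
    ∑ l, (∑ i, (B i ⊗ₖ (1 : Matrix o o R)) * ρ * (B i ⊗ₖ (1 : Matrix o o R))ᴴ) (l, j) (l, j) =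
      ∑ p, ρ (p, j) (p, j) := by
  calc ∑ l, (∑ i, (B i ⊗ₖ (1 : Matrix o o R)) * ρ * (B i ⊗ₖ (1 : Matrix o o R))ᴴ) (l, j) (l, j)
      = ∑ i, trace (B i * ρ.submatrix (·, j) (·, j) * (B i)ᴴ) := by
        simp only [Matrix.sum_apply, ← kronecker_one_mul_mul_conjTranspose_submatrix, trace, diag,
          submatrix_apply]
        exact Finset.sum_comm
    _ = trace ((∑ i, (B i)ᴴ * B i) * ρ.submatrix (·, j) (·, j)) := by
        simp only [trace_mul_cycle (B _), Finset.sum_mul, trace_sum]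
    _ = ∑ p, ρ (p, j) (p, j) := by rw [hB, one_mul]; rfl

end PartialTrace

section Channel

variable {d : ℕ}

lemma Emat_apply (j i a b : Fin d) : Emat d j i a b = if j = a ∧ i = b then 1 else 0 := by
  simp [Emat, single]

lemma P0_eq_diagonal : P0 d = diagonal fun p : Fin d × Fin d => if p.1 = p.2 then 1 else 0 := by
  ext ⟨a, b⟩ ⟨c, e⟩
  simp only [P0, Matrix.sum_apply, kroneckerMap_apply, Emat_apply, diagonal_apply, Prod.mk.injEq]
  rw [Finset.sum_eq_single a (by aesop) (by simp)]
  by_cases h : a = b <;> by_cases h2 : a = c <;> by_cases h3 : a = e <;> aesop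

lemma P0_mulVec_eq_self {φ : Fin d × Fin d → ℂ} (hφ : ∀ p : Fin d × Fin d, p.1 ≠ p.2 → φ p = 0) :
    P0 d *ᵥ φ = φ := by
  funext p
  rw [P0_eq_diagonal, mulVec_diagonal]
  by_cases hp : p.1 = p.2
  · rw [if_pos hp, one_mul]
  · rw [if_neg hp, zero_mul, hφ p hp]

lemma Kch_apply (ρ : Matrix (Fin d × Fin d) (Fin d × Fin d) ℂ) (a b c e : Fin d) :
    Kch d ρ (a, b) (c, e) =
      (if a = b then 1 else 0) * ρ (a, b) (c, e) * (if c = e then 1 else 0) +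
        if a = b ∧ a = c ∧ a = e then ∑ l ∈ Finset.univ.filter (· ≠ a), ρ (l, a) (l, a) else 0 := by
  simp only [Kch, Matrix.add_apply, P0_eq_diagonal, diagonal_mul, mul_diagonal, Matrix.sum_apply,
    Matrix.smul_apply, kroneckerMap_apply, Emat_apply, smul_eq_mul]
  congr 1
  rw [Finset.sum_eq_single a (by aesop) (by simp)]
  by_cases h : a = b <;> by_cases h2 : a = c <;> by_cases h3 : a = e <;> aesop

lemma Kch_eq_self {ρ : Matrix (Fin d × Fin d) (Fin d × Fin d) ℂ} (hρ : ρ.PosSemidef)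
    (h : ∀ l j : Fin d, l ≠ j → ρ (l, j) (l, j) = 0) : Kch d ρ = ρ := by
  ext ⟨a, b⟩ ⟨c, e⟩
  have hres : ∑ l ∈ Finset.univ.filter (· ≠ a), ρ (l, a) (l, a) = 0 :=
    Finset.sum_eq_zero fun l hl => h l a (Finset.mem_filter.mp hl).2
  rw [Kch_apply, hres, ite_self, add_zero]
  by_cases hab : a = b
  · by_cases hce : c = e
    · simp [hab, hce]
    · simp [hρ.apply_eq_zero_of_diag_eq_zero_right (h c e hce)]
  · simp [hρ.apply_eq_zero_of_diag_eq_zero_left (h a b hab)]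

end Channel

lemma star_ejj_dotProduct {d : ℕ} (j : Fin d) (φ : Fin d × Fin d → ℂ) :
    star (ejj d j) ⬝ᵥ φ = φ (j, j) := by
  simp only [dotProduct, Pi.star_apply, ejj, eVec, Fintype.sum_prod_type, apply_ite (star : ℂ → ℂ),
    star_one, star_zero, mul_ite, ite_mul, one_mul, zero_mul, mul_zero, mul_one,
    Finset.sum_ite_eq', Finset.mem_univ, if_true]

lemma encode_posSemidef {d D m : ℕ} (A : Fin d → Fin m → Matrix (Fin d) (Fin D) ℂ)
    {ρ : Matrix (Fin D × Fin d) (Fin D × Fin d) ℂ} (hρ : ρ.PosSemidef) (x : Fin d) :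
    (encode d D m A ρ x).PosSemidef :=
  posSemidef_sum _ fun _ _ => hρ.mul_mul_conjTranspose_same _

section PureOutput

variable {d : ℕ} {ρ : Matrix (Fin d × Fin d) (Fin d × Fin d) ℂ} {φ : Fin d × Fin d → ℂ}

lemma apply_eq_zero_of_Kch_eq_vecMulVec (hK : Kch d ρ = vecMulVec φ (star φ))
    {p : Fin d × Fin d} (hp : p.1 ≠ p.2) : φ p = 0 := by
  obtain ⟨a, b⟩ := p
  have hab : a ≠ b := hp
  have h := congrFun (congrFun hK (a, b)) (a, b)
  simpa [Kch_apply, hab, vecMulVec_apply, eq_comm (a := (0 : ℂ))] using h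

lemma apply_diag_add_sum_ne_of_Kch_eq_vecMulVec (hK : Kch d ρ = vecMulVec φ (star φ))
    (j : Fin d) :
    ρ (j, j) (j, j) + ∑ l ∈ Finset.univ.filter (· ≠ j), ρ (l, j) (l, j) = (‖φ (j, j)‖ : ℂ) ^ 2 := by
  have h := congrFun (congrFun hK (j, j)) (j, j)
  simpa [Kch_apply, vecMulVec_apply, RCLike.star_def, Complex.mul_conj'] using h

lemma norm_sq_apply_diag_of_Kch_eq_vecMulVec (hK : Kch d ρ = vecMulVec φ (star φ)) (j : Fin d) :
    ((‖φ (j, j)‖ ^ 2 : ℝ) : ℂ) = ∑ l, ρ (l, j) (l, j) := by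
  rw [Complex.ofReal_pow, ← apply_diag_add_sum_ne_of_Kch_eq_vecMulVec hK, Finset.filter_ne']
  exact Finset.add_sum_erase _ (fun l => ρ (l, j) (l, j)) (Finset.mem_univ j)

lemma apply_diag_diag_of_Kch_eq_vecMulVec (hK : Kch d ρ = vecMulVec φ (star φ)) {j k : Fin d}
    (hjk : j ≠ k) : ρ (j, j) (k, k) = φ (j, j) * star (φ (k, k)) := by
  have h := congrFun (congrFun hK (j, j)) (k, k)
  simpa [Kch_apply, hjk, vecMulVec_apply] using h

lemma apply_offDiag_eq_zero_of_Kch_eq_vecMulVec (hρ : ρ.PosSemidef)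
    (hK : Kch d ρ = vecMulVec φ (star φ)) {c : ℝ} (hc : 0 < c) (hφ : ∀ j, ‖φ (j, j)‖ ^ 2 = c)
    {l j : Fin d} (hlj : l ≠ j) : ρ (l, j) (l, j) = 0 := by
  set R : Fin d → ℂ := fun j => ∑ l ∈ Finset.univ.filter (· ≠ j), ρ (l, j) (l, j)
  have hR_nonneg : ∀ j, 0 ≤ R j := fun j => Finset.sum_nonneg fun l _ => hρ.diag_nonneg
  have hdiag : ∀ j, ρ (j, j) (j, j) = c - R j := fun j => by
    rw [← hφ j, Complex.ofReal_pow, ← apply_diag_add_sum_ne_of_Kch_eq_vecMulVec hK,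
      add_sub_cancel_right]
  have hnorm : ∀ j, star (φ (j, j)) * φ (j, j) = c := fun j => by
    rw [RCLike.star_def, Complex.conj_mul', ← hφ j, Complex.ofReal_pow]
  have hquad : 0 ≤ -((c : ℂ) * (R j + R l)) := by
    have h := hρ.dotProduct_mulVec_nonneg
      (Pi.single (j, j) (φ (j, j)) + Pi.single (l, l) (-φ (l, l)))
    rw [star_single_add_single_dotProduct_mulVec, hdiag, hdiag, star_neg,
      apply_diag_diag_of_Kch_eq_vecMulVec hK hlj.symm,
      apply_diag_diag_of_Kch_eq_vecMulVec hK hlj] at h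
    convert h using 1
    linear_combination (R j - c + 2 * (star (φ (l, l)) * φ (l, l))) * hnorm j + (c + R l) * hnorm l
  have hsum : R j + R l ≤ 0 := by
    have := mul_nonneg (Complex.zero_le_real.mpr (inv_nonneg.mpr hc.le)) hquad
    have hc' : (c : ℂ) ≠ 0 := by exact_mod_cast hc.ne'
    rwa [Complex.ofReal_inv, mul_neg, inv_mul_cancel_left₀ hc', neg_nonneg] at this
  have hRj : R j = 0 :=
    le_antisymm ((le_add_of_nonneg_right (hR_nonneg l)).trans hsum) (hR_nonneg j)
  exact (Finset.sum_eq_zero_iff_of_nonneg fun _ _ => hρ.diag_nonneg).mp hRj l (by simp [hlj])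

end PureOutput

lemma sum_norm_sq_apply_diag_eq_one {d : ℕ} {Φ : Fin d → Fin d × Fin d → ℂ}
    (hΦ : ∀ x y : Fin d, star (Φ x) ⬝ᵥ Φ y = if x = y then 1 else 0)
    (hsupp : ∀ x (p : Fin d × Fin d), p.1 ≠ p.2 → Φ x p = 0) (j : Fin d) :
    ∑ x, ‖Φ x (j, j)‖ ^ 2 = 1 := by
  refine sum_norm_sq_apply_eq_one_of_mul_conjTranspose_eq_one (U := of fun x j => Φ x (j, j)) ?_ j
  ext x y
  have hsupp' : ∀ p : Fin d × Fin d, p.1 ≠ p.2 → star (Φ y) p = 0 := fun p hp => by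
    rw [Pi.star_apply, hsupp y p hp, star_zero]
  rw [mul_apply, one_apply]
  convert hΦ y x using 1
  · rw [dotProduct_eq_sum_diag hsupp']
    simp only [of_apply, conjTranspose_apply, Pi.star_apply, mul_comm]
  · exact if_congr eq_comm rfl rfl

theorem stmt_9_general (d D m : ℕ)
    (ρstar : Matrix (Fin D × Fin d) (Fin D × Fin d) ℂ)
    (hpos : ρstar.PosSemidef)
    (A : Fin d → Fin m → Matrix (Fin d) (Fin D) ℂ)
    (hA : ∀ x : Fin d, ∑ i : Fin m, (A x i)ᴴ * A x i = 1)
    (Φ : Fin d → (Fin d × Fin d → ℂ))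
    (hΦ : ∀ x y : Fin d, star (Φ x) ⬝ᵥ Φ y = if x = y then 1 else 0)
    (hK : ∀ x : Fin d, Kch d (encode d D m A ρstar x) = vecMulVec (Φ x) (star (Φ x))) :
    ∀ x : Fin d, encode d D m A ρstar x = vecMulVec (Φ x) (star (Φ x)) ∧
      (P0 d).mulVec (Φ x) = Φ x ∧
      ∀ j : Fin d, ‖star (ejj d j) ⬝ᵥ Φ x‖ ^ 2 = 1 / (d : ℝ) := by
  intro x
  have hsupp : ∀ y (p : Fin d × Fin d), p.1 ≠ p.2 → Φ y p = 0 :=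
    fun y _ hp => apply_eq_zero_of_Kch_eq_vecMulVec (hK y) hp
  have hweight : ∀ y j, ‖Φ y (j, j)‖ ^ 2 = ‖Φ x (j, j)‖ ^ 2 := fun y j => by
    have h : ∀ y, ((‖Φ y (j, j)‖ ^ 2 : ℝ) : ℂ) = ∑ p, ρstar (p, j) (p, j) := fun y =>
      (norm_sq_apply_diag_of_Kch_eq_vecMulVec (hK y) j).trans
        (sum_kraus_kronecker_one_apply_diag (A y) (hA y) ρstar j)
    exact_mod_cast (h y).trans (h x).symm
  have hnorm : ∀ j, ‖Φ x (j, j)‖ ^ 2 = 1 / d := fun j => by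
    have h := sum_norm_sq_apply_diag_eq_one hΦ hsupp j
    simp only [hweight, Finset.sum_const, Finset.card_univ, Fintype.card_fin, nsmul_eq_mul] at h
    exact eq_one_div_of_mul_eq_one_right h
  have hρ := encode_posSemidef A hpos x
  have hc : (0 : ℝ) < 1 / d := by have := x.pos; positivity
  refine ⟨?_, P0_mulVec_eq_self (hsupp x), fun j => by rw [star_ejj_dotProduct, hnorm]⟩
  rw [← hK x, Kch_eq_self hρ fun l j hlj =>
    apply_offDiag_eq_zero_of_Kch_eq_vecMulVec hρ (hK x) hc hnorm hlj]

/-- Lemma 2, concrete form: a perfect transmission of a classical dit through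
the controlled order of `d` information-erasing channels forces every encoded state `ρ_x` to
be the maximally entangled pure state `Φ_x Φ_x†`, with `Φ_x` in the decoherence-free
subspace and `|⟨e_j ⊗ e_j, Φ_x⟩|² = 1/d`. -/
theorem stmt_9 (d D m : ℕ) [NeZero d] [NeZero D] (hd : 2 ≤ d)
    (ρstar : Matrix (Fin D × Fin d) (Fin D × Fin d) ℂ)
    (hpos : ρstar.PosSemidef) (htr : ρstar.trace = 1)
    (A : Fin d → Fin m → Matrix (Fin d) (Fin D) ℂ)
    (hA : ∀ x : Fin d, ∑ i : Fin m, (A x i)ᴴ * A x i = 1)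
    (Φ : Fin d → (Fin d × Fin d → ℂ))
    (hΦ : ∀ x y : Fin d, star (Φ x) ⬝ᵥ Φ y = if x = y then 1 else 0)
    (hK : ∀ x : Fin d, Kch d (encode d D m A ρstar x) = vecMulVec (Φ x) (star (Φ x))) :
    ∀ x : Fin d, encode d D m A ρstar x = vecMulVec (Φ x) (star (Φ x)) ∧
      (P0 d).mulVec (Φ x) = Φ x ∧
      ∀ j : Fin d, ‖star (ejj d j) ⬝ᵥ Φ x‖ ^ 2 = 1 / (d : ℝ) :=
  stmt_9_general d D m ρstar hpos A hA Φ hΦ hK
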